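/- Let Γ be a finite connected simple graph with vertex set V, let 𝒯 be a maximal tubing of Γ, and let w be its weight vector. Let T ∈ 𝒯 ∪ {V} with |T| ≥ 2 and let v_T be the unique vertex of T not contained in any element of 𝒯 properly contained in T. Then for every tube T' ∈ 𝒯 with T' ⊊ T, one has w(v_T) > Σ_{v ∈ T'} w(v); that is, the maximal vertex of a tube always has weight strictly greater than the total weight of any smaller tube nested inside it. -/

import Mathlib

variable {V : Type*} [Fintype V] [DecidableEq V]

/-- A tube of a simple graph: a nonempty proper subset of vertices whose
induced subgraph is connected. -/
def IsTube (G : SimpleGraph V) (T : Finset V) : Prop :=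
  T.Nonempty ∧ T ≠ Finset.univ ∧ (G.induce (T : Set V)).Connected

/-- A tubing: a set of tubes, pairwise either properly nested or disjoint with
no edge between them. -/
def IsTubing (G : SimpleGraph V) (𝒯 : Finset (Finset V)) : Prop :=
  (∀ T ∈ 𝒯, IsTube G T) ∧
  ∀ T ∈ 𝒯, ∀ T' ∈ 𝒯, T ≠ T' →
    T ⊂ T' ∨ T' ⊂ T ∨
      ((∀ v ∈ T, v ∉ T') ∧ ∀ u ∈ T, ∀ v ∈ T', ¬ G.Adj u v)

/-- A maximal tubing: one not properly contained in any other tubing. -/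
def IsMaxTubing (G : SimpleGraph V) (𝒯 : Finset (Finset V)) : Prop :=
  IsTubing G 𝒯 ∧ ∀ 𝒯' : Finset (Finset V), IsTubing G 𝒯' → 𝒯 ⊆ 𝒯' → 𝒯' = 𝒯

/-- `w` is the weight vector of the maximal tubing `𝒯`: for each vertex `v`,
if the minimal element `T` of `𝒯 ∪ {univ}` containing `v` is the singleton
`{v}` then `w v = 0`, and otherwise (`|T| ≥ 2`)
`w v = 3^(|T|-2) - ∑_{v' ∈ T, v' ≠ v} w v'`. -/
def IsWeightVector (𝒯 : Finset (Finset V)) (w : V → ℤ) : Prop :=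
  ∀ v : V, ∀ T ∈ insert Finset.univ 𝒯, v ∈ T →
    (∀ S ∈ insert Finset.univ 𝒯, v ∈ S → T ⊆ S) →
    (T = {v} → w v = 0) ∧
    (2 ≤ T.card → w v = 3 ^ (T.card - 2) - ∑ v' ∈ T.erase v, w v')

/-!
Summing the defining recursion over a tube `S ∈ 𝒯` shows that its weights add up to
`tubeWeight |S|` (that is, `3 ^ (|S| - 2)`, or `0` for a singleton), as soon as `S` has a vertex
lying in no smaller tube of `𝒯`: an edge leaving a largest proper subtube of `S` ends at one.
Maximality of `𝒯` makes such a vertex `v_T` of `T` unique: if `u ≠ u'` were two of them, a maximal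
connected subset of `T \ {u'}` containing `u` could be added to `𝒯` as a new tube. Hence the
maximal proper subtubes of `T` partition `T \ {v_T}`, and superadditivity of `tubeWeight` bounds
the weight of `T \ {v_T}`, as well as that of any `T' ⊊ T`, by `tubeWeight (|T| - 1)`, which is
less than half of `3 ^ (|T| - 2) = w v_T + weight (T \ {v_T})`.
-/

open Finset

namespace SimpleGraph

variable {α : Type*} {H : SimpleGraph α}

def Separated (H : SimpleGraph α) (S T : Finset α) : Prop :=
  (∀ v ∈ S, v ∉ T) ∧ ∀ u ∈ S, ∀ v ∈ T, ¬ H.Adj u v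

def Compatible (H : SimpleGraph α) (S T : Finset α) : Prop :=
  S ⊂ T ∨ T ⊂ S ∨ H.Separated S T

lemma Separated.symm {S T : Finset α} (h : H.Separated S T) : H.Separated T S :=
  ⟨fun v hvT hvS => h.1 v hvS hvT, fun u hu v hv huv => h.2 v hv u hu huv.symm⟩

lemma Separated.mono_left {S S' T : Finset α} (h : H.Separated S T) (hS' : S' ⊆ S) :
    H.Separated S' T :=
  ⟨fun v hv => h.1 v (hS' hv), fun u hu => h.2 u (hS' hu)⟩

lemma Compatible.symm {S T : Finset α} (h : H.Compatible S T) : H.Compatible T S := by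
  rcases h with h | h | h
  exacts [Or.inr (Or.inl h), Or.inl h, Or.inr (Or.inr h.symm)]

lemma exists_adj_of_induce_connected {T C : Set α} (hT : (H.induce T).Connected) {a b : α}
    (ha : a ∈ T) (hb : b ∈ T) (haC : a ∈ C) (hbC : b ∉ C) :
    ∃ x ∈ C, ∃ y ∈ T, y ∉ C ∧ H.Adj x y := by
  obtain ⟨p⟩ := hT.preconnected ⟨a, ha⟩ ⟨b, hb⟩
  obtain ⟨d, -, hd₁, hd₂⟩ := p.exists_boundary_dart {x : T | x.1 ∈ C} haC hbC
  exact ⟨d.fst, hd₁, d.snd, d.snd.2, hd₂, d.adj⟩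

lemma subset_or_separated_of_maximal [DecidableEq α] {E Y S : Finset α}
    (hY : Maximal (fun Y : Finset α => Y ⊆ E ∧ (H.induce (Y : Set α)).Connected) Y)
    (hSE : S ⊆ E) (hS : (H.induce (S : Set α)).Connected) :
    S ⊆ Y ∨ H.Separated S Y := by
  have absorb : (H.induce ((Y : Set α) ∪ S)).Connected → S ⊆ Y := fun hconn => by
    have := hY.eq_of_le ⟨union_subset hY.prop.1 hSE, by rwa [coe_union]⟩ subset_union_left
    exact this ▸ subset_union_right
  by_cases hmeet : ∃ v ∈ S, v ∈ Y
  · obtain ⟨v, hvS, hvY⟩ := hmeet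
    exact .inl <| absorb <|
      induce_union_connected hY.prop.2.preconnected hS.preconnected ⟨v, hvY, hvS⟩
  by_cases hadj : ∃ a ∈ S, ∃ b ∈ Y, H.Adj a b
  · obtain ⟨a, haS, b, hbY, hab⟩ := hadj
    exact .inl <| absorb <|
      connected_induce_union hY.prop.2.preconnected hS.preconnected hbY haS hab.symm
  simp only [not_exists, not_and] at hmeet hadj
  exact .inr ⟨hmeet, hadj⟩

end SimpleGraph

open SimpleGraph

def IsMaxVertex {α : Type*} (𝒯 : Finset (Finset α)) (T : Finset α) (v : α) : Prop :=
  v ∈ T ∧ ∀ S ∈ 𝒯, S ⊂ T → v ∉ S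

variable {G : SimpleGraph V} {𝒯 : Finset (Finset V)}

namespace IsTubing

lemma ssubset_or_subset_or_separated (htub : IsTubing G 𝒯) {S T : Finset V} (hS : S ∈ 𝒯)
    (hT : T ∈ insert univ 𝒯) : S ⊂ T ∨ T ⊆ S ∨ G.Separated S T := by
  rcases mem_insert.1 hT with rfl | hT
  · exact .inl (ssubset_univ_iff.2 (htub.1 S hS).2.1)
  rcases eq_or_ne S T with rfl | hne
  · exact .inr (.inl subset_rfl)
  rcases htub.2 S hS T hT hne with h | h | h
  exacts [.inl h, .inr (.inl h.subset), .inr (.inr h)]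

lemma subset_or_subset_of_mem (htub : IsTubing G 𝒯) {S S' : Finset V}
    (hS : S ∈ insert univ 𝒯) (hS' : S' ∈ insert univ 𝒯) {v : V} (hv : v ∈ S) (hv' : v ∈ S') :
    S ⊆ S' ∨ S' ⊆ S := by
  rcases mem_insert.1 hS with rfl | hS
  · exact .inr (subset_univ _)
  rcases htub.ssubset_or_subset_or_separated hS hS' with h | h | h
  exacts [.inl h.subset, .inr h, absurd hv' (h.1 v hv)]

lemma subset_of_isMaxVertex (htub : IsTubing G 𝒯) {T : Finset V} (hT : T ∈ insert univ 𝒯)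
    {v : V} (hv : IsMaxVertex 𝒯 T v) : ∀ S ∈ insert univ 𝒯, v ∈ S → T ⊆ S := by
  intro S hS hvS
  rcases htub.subset_or_subset_of_mem hT hS hv.1 hvS with hTS | hST
  · exact hTS
  by_contra hTS
  have hS𝒯 : S ∈ 𝒯 := (mem_insert.1 hS).resolve_left (by rintro rfl; exact hTS (subset_univ T))
  exact hv.2 S hS𝒯 ⟨hST, hTS⟩ hvS

lemma exists_isMaxVertex (htub : IsTubing G 𝒯) {T : Finset V} (hT : T ∈ 𝒯) :
    ∃ v, IsMaxVertex 𝒯 T v := by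
  by_cases hsub : ∃ S ∈ 𝒯, S ⊂ T
  · obtain ⟨S, hS, hST⟩ := hsub
    obtain ⟨C, -, hC⟩ := Finite.exists_le_maximal (p := fun S => S ∈ 𝒯 ∧ S ⊂ T) ⟨hS, hST⟩
    obtain ⟨a, haC⟩ := (htub.1 C hC.prop.1).1
    obtain ⟨b, hbT, hbC⟩ := exists_of_ssubset hC.prop.2
    obtain ⟨x, hxC, y, hyT, hyC, hxy⟩ := exists_adj_of_induce_connected (htub.1 T hT).2.2
      (hC.prop.2.subset haC) hbT haC hbC
    refine ⟨y, hyT, fun S hS hST hyS => ?_⟩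
    rcases htub.2 S hS C hC.prop.1 (by rintro rfl; exact hyC hyS) with h | h | h
    · exact hyC (h.subset hyS)
    · exact hC.not_gt ⟨hS, hST⟩ h
    · exact h.2 y hyS x hxC hxy.symm
  · obtain ⟨v, hv⟩ := (htub.1 T hT).1
    exact ⟨v, hv, fun S hS hST _ => hsub ⟨S, hS, hST⟩⟩

lemma eq_of_maximal_of_mem (htub : IsTubing G 𝒯) {T C C' : Finset V}
    (hC : Maximal (fun S => S ∈ 𝒯 ∧ S ⊂ T) C) (hC' : Maximal (fun S => S ∈ 𝒯 ∧ S ⊂ T) C')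
    {v : V} (hv : v ∈ C) (hv' : v ∈ C') : C = C' := by
  rcases htub.subset_or_subset_of_mem (mem_insert_of_mem hC.prop.1)
    (mem_insert_of_mem hC'.prop.1) hv hv' with h | h
  exacts [hC.eq_of_le hC'.prop h, (hC'.eq_of_le hC.prop h).symm]

end IsTubing

lemma IsTubing.insert {Y : Finset V} (htub : IsTubing G 𝒯) (hY : IsTube G Y)
    (hcompat : ∀ S ∈ 𝒯, S ≠ Y → G.Compatible Y S) : IsTubing G (insert Y 𝒯) := by
  refine ⟨forall_mem_insert _ _ _ |>.2 ⟨hY, htub.1⟩, ?_⟩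
  simp only [mem_insert]
  rintro S (rfl | hS) S' (rfl | hS') hne
  · exact absurd rfl hne
  · exact hcompat S' hS' hne.symm
  · exact (hcompat S hS hne).symm
  · exact htub.2 S hS S' hS' hne

lemma IsMaxTubing.mem_of_forall_compatible (hmax : IsMaxTubing G 𝒯) {Y : Finset V}
    (hY : IsTube G Y) (hcompat : ∀ S ∈ 𝒯, S ≠ Y → G.Compatible Y S) : Y ∈ 𝒯 :=
  hmax.2 _ (hmax.1.insert hY hcompat) (subset_insert _ _) ▸ mem_insert_self Y 𝒯

lemma IsMaxTubing.isMaxVertex_unique (hmax : IsMaxTubing G 𝒯) {T : Finset V}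
    (hT : T ∈ insert univ 𝒯) {u u' : V} (hu : IsMaxVertex 𝒯 T u) (hu' : IsMaxVertex 𝒯 T u') :
    u = u' := by
  by_contra hne
  obtain ⟨Y, huY, hY⟩ := Finite.exists_le_maximal
    (p := fun Y : Finset V => Y ⊆ T.erase u' ∧ (G.induce (Y : Set V)).Connected) (a := {u})
    ⟨singleton_subset_iff.2 (mem_erase.2 ⟨hne, hu.1⟩), by
      rw [coe_singleton, induce_singleton_eq_top]; exact connected_top⟩
  have huY : u ∈ Y := singleton_subset_iff.1 huY
  have hu'Y : u' ∉ Y := fun h => (mem_erase.1 (hY.prop.1 h)).1 rfl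
  have hYT : Y ⊂ T := ⟨hY.prop.1.trans (erase_subset _ _), fun h => hu'Y (h hu'.1)⟩
  have hYtube : IsTube G Y := ⟨⟨u, huY⟩, fun h => hu'Y (h ▸ mem_univ u'), hY.prop.2⟩
  refine hu.2 Y (hmax.mem_of_forall_compatible hYtube fun S hS hSY => ?_) hYT huY
  rcases hmax.1.ssubset_or_subset_or_separated hS hT with hST | hTS | hsep
  · have hSE : S ⊆ T.erase u' := fun x hx =>
      mem_erase.2 ⟨by rintro rfl; exact hu'.2 S hS hST hx, hST.subset hx⟩
    rcases subset_or_separated_of_maximal hY hSE (hmax.1.1 S hS).2.2 with h | h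
    · exact .inr (.inl ⟨h, fun h' => hSY (h.antisymm h')⟩)
    · exact .inr (.inr h.symm)
  · exact .inl (hYT.trans_subset hTS)
  · exact .inr (.inr (hsep.symm.mono_left hYT.subset))

lemma IsMaxTubing.mem_erase_iff_exists_maximal (hmax : IsMaxTubing G 𝒯) {T : Finset V}
    (hT : T ∈ insert univ 𝒯) {v x : V} (hv : IsMaxVertex 𝒯 T v) :
    x ∈ T.erase v ↔ ∃ C, Maximal (fun S => S ∈ 𝒯 ∧ S ⊂ T) C ∧ x ∈ C := by
  refine ⟨fun hx => ?_, fun ⟨C, hC, hxC⟩ => ?_⟩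
  · obtain ⟨hxv, hxT⟩ := mem_erase.1 hx
    have hx' : ¬ IsMaxVertex 𝒯 T x := fun hx' => hxv (hmax.isMaxVertex_unique hT hx' hv)
    obtain ⟨S, hS, hST, hxS⟩ : ∃ S ∈ 𝒯, S ⊂ T ∧ x ∈ S := by
      simpa [IsMaxVertex, hxT] using hx'
    obtain ⟨C, hSC, hC⟩ := Finite.exists_le_maximal (p := fun S => S ∈ 𝒯 ∧ S ⊂ T) ⟨hS, hST⟩
    exact ⟨C, hC, hSC hxS⟩
  · exact mem_erase.2 ⟨fun h => hv.2 C hC.prop.1 hC.prop.2 (h ▸ hxC), hC.prop.2.subset hxC⟩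

def tubeWeight (n : ℕ) : ℤ := if n ≤ 1 then 0 else 3 ^ (n - 2)

lemma tubeWeight_of_le_one {n : ℕ} (h : n ≤ 1) : tubeWeight n = 0 := if_pos h

lemma tubeWeight_of_two_le {n : ℕ} (h : 2 ≤ n) : tubeWeight n = 3 ^ (n - 2) := if_neg (by omega)

lemma tubeWeight_nonneg (n : ℕ) : 0 ≤ tubeWeight n := by
  unfold tubeWeight; split <;> positivity

lemma tubeWeight_mono : Monotone tubeWeight := by
  intro m n hmn
  rcases le_or_gt m 1 with hm | hm
  · rw [tubeWeight_of_le_one hm]; exact tubeWeight_nonneg n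
  rw [tubeWeight_of_two_le hm, tubeWeight_of_two_le (by omega)]
  exact pow_le_pow_right₀ (by norm_num) (by omega)

lemma tubeWeight_add_le (m n : ℕ) : tubeWeight m + tubeWeight n ≤ tubeWeight (m + n) := by
  rcases le_or_gt m 1 with hm | hm
  · rw [tubeWeight_of_le_one hm, zero_add]; exact tubeWeight_mono (by omega)
  rcases le_or_gt n 1 with hn | hn
  · rw [tubeWeight_of_le_one hn, add_zero]; exact tubeWeight_mono (by omega)
  rw [tubeWeight_of_two_le hm, tubeWeight_of_two_le hn, tubeWeight_of_two_le (by omega),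
    show m + n - 2 = m + n - 3 + 1 by omega, pow_succ]
  have hm' : (3 : ℤ) ^ (m - 2) ≤ 3 ^ (m + n - 3) := pow_le_pow_right₀ (by norm_num) (by omega)
  have hn' : (3 : ℤ) ^ (n - 2) ≤ 3 ^ (m + n - 3) := pow_le_pow_right₀ (by norm_num) (by omega)
  have : (0 : ℤ) ≤ 3 ^ (m + n - 3) := by positivity
  linarith

lemma sum_tubeWeight_le {ι : Type*} (s : Finset ι) (n : ι → ℕ) :
    ∑ i ∈ s, tubeWeight (n i) ≤ tubeWeight (∑ i ∈ s, n i) := by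
  have := le_sum_of_subadditive (fun k => -tubeWeight k) (by simp [tubeWeight_of_le_one])
    (fun a b => by linarith [tubeWeight_add_le a b]) s n
  simpa using this

lemma two_mul_tubeWeight_pred_lt {n : ℕ} (h : 2 ≤ n) : 2 * tubeWeight (n - 1) < 3 ^ (n - 2) := by
  rcases h.eq_or_lt with rfl | h
  · simp [tubeWeight_of_le_one]
  rw [tubeWeight_of_two_le (by omega), show n - 2 = n - 1 - 2 + 1 by omega, pow_succ]
  have : (0 : ℤ) < 3 ^ (n - 1 - 2) := by positivity
  linarith

namespace IsWeightVector

variable {w : V → ℤ}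

lemma weight_eq (hw : IsWeightVector 𝒯 w) (htub : IsTubing G 𝒯) {T : Finset V}
    (hT : T ∈ insert univ 𝒯) {v : V} (hv : IsMaxVertex 𝒯 T v) (hcard : 2 ≤ T.card) :
    w v = 3 ^ (T.card - 2) - ∑ x ∈ T.erase v, w x :=
  (hw v T hT hv.1 (htub.subset_of_isMaxVertex hT hv)).2 hcard

lemma sum_eq_tubeWeight (hw : IsWeightVector 𝒯 w) (htub : IsTubing G 𝒯) {T : Finset V}
    (hT : T ∈ 𝒯) : ∑ x ∈ T, w x = tubeWeight T.card := by
  obtain ⟨v, hv⟩ := htub.exists_isMaxVertex hT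
  have hT' : T ∈ insert univ 𝒯 := mem_insert_of_mem hT
  rcases Nat.lt_or_ge T.card 2 with hcard | hcard
  · obtain rfl : T = {v} := eq_singleton_iff_unique_mem.2
      ⟨hv.1, fun x hx => card_le_one.1 (by omega) x hx v hv.1⟩
    rw [sum_singleton, (hw v _ hT' hv.1 (htub.subset_of_isMaxVertex hT' hv)).1 rfl,
      tubeWeight_of_le_one (card_singleton v).le]
  · rw [← add_sum_erase T w hv.1, hw.weight_eq htub hT' hv hcard, tubeWeight_of_two_le hcard]
    ring

lemma sum_erase_le (hw : IsWeightVector 𝒯 w) (hmax : IsMaxTubing G 𝒯) {T : Finset V}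
    (hT : T ∈ insert univ 𝒯) {v : V} (hv : IsMaxVertex 𝒯 T v) :
    ∑ x ∈ T.erase v, w x ≤ tubeWeight (T.card - 1) := by
  classical
  set 𝒞 := {C ∈ 𝒯 | Maximal (fun S => S ∈ 𝒯 ∧ S ⊂ T) C}
  have hdisj : (𝒞 : Set (Finset V)).PairwiseDisjoint id := fun C hC C' hC' hne =>
    disjoint_left.2 fun x hx hx' => hne <|
      hmax.1.eq_of_maximal_of_mem (mem_filter.1 hC).2 (mem_filter.1 hC').2 hx hx'
  have hcover : 𝒞.biUnion id = T.erase v := by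
    ext x
    simp only [𝒞, mem_biUnion, mem_filter, id, hmax.mem_erase_iff_exists_maximal hT hv]
    exact ⟨fun ⟨C, ⟨_, hC⟩, hxC⟩ => ⟨C, hC, hxC⟩, fun ⟨C, hC, hxC⟩ => ⟨C, ⟨hC.prop.1, hC⟩, hxC⟩⟩
  calc ∑ x ∈ T.erase v, w x = ∑ C ∈ 𝒞, ∑ x ∈ C, w x := by rw [← hcover, sum_biUnion hdisj]; rfl
    _ = ∑ C ∈ 𝒞, tubeWeight C.card :=
      sum_congr rfl fun C hC => hw.sum_eq_tubeWeight hmax.1 (mem_filter.1 hC).1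
    _ ≤ tubeWeight (∑ C ∈ 𝒞, C.card) := sum_tubeWeight_le _ _
    _ = tubeWeight (T.card - 1) := by
      rw [← card_erase_of_mem hv.1, ← hcover, card_biUnion hdisj]; rfl

end IsWeightVector

theorem maximal_vertex_weight_gt_subtube_weight_general
    (G : SimpleGraph V)
    (𝒯 : Finset (Finset V)) (h : IsMaxTubing G 𝒯)
    (w : V → ℤ) (hw : IsWeightVector 𝒯 w)
    (T : Finset V) (hT : T ∈ insert Finset.univ 𝒯) (hTcard : 2 ≤ T.card)
    (vT : V) (hvT : vT ∈ T ∧ ∀ S ∈ 𝒯, S ⊂ T → vT ∉ S) :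
    ∀ T' ∈ 𝒯, T' ⊂ T → (∑ v ∈ T', w v) < w vT := by
  intro T' hT' hT'T
  calc ∑ v ∈ T', w v = tubeWeight T'.card := hw.sum_eq_tubeWeight h.1 hT'
    _ ≤ tubeWeight (T.card - 1) := tubeWeight_mono (by have := card_lt_card hT'T; omega)
    _ < 3 ^ (T.card - 2) - tubeWeight (T.card - 1) := by
      linarith [two_mul_tubeWeight_pred_lt hTcard]
    _ ≤ w vT := by
      rw [hw.weight_eq h.1 hT hvT hTcard]
      linarith [hw.sum_erase_le h hT hvT]

theorem maximal_vertex_weight_gt_subtube_weight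
    (G : SimpleGraph V) (hG : G.Connected)
    (𝒯 : Finset (Finset V)) (h : IsMaxTubing G 𝒯)
    (w : V → ℤ) (hw : IsWeightVector 𝒯 w)
    (T : Finset V) (hT : T ∈ insert Finset.univ 𝒯) (hTcard : 2 ≤ T.card)
    (vT : V) (hvT : vT ∈ T ∧ ∀ S ∈ 𝒯, S ⊂ T → vT ∉ S) :
    ∀ T' ∈ 𝒯, T' ⊂ T → (∑ v ∈ T', w v) < w vT :=
  maximal_vertex_weight_gt_subtube_weight_general G 𝒯 h w hw T hT hTcard vT hvT
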